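/- Let d ≥ 1 and let f : ℝ^d → ℝ be differentiable with L-Lipschitz gradient. For δ > 0 define the one-sided smoothed gradient ∇f_δ(x) = (1/δ)·E_u[(f(x + δu) − f(x))·(d+1)u/(1+‖u‖²)], where u is distributed with the unit-scale truncated Cauchy density h. Let c₁₂ := d/c₂², the squared Frobenius norm of the inverse of the matrix A = E_u[(d+1)uuᵀ/(1+‖u‖²)] = c₂I_d. Then for every x ∈ ℝ^d, ‖∇f(x)‖² ≤ 2c₁₂·‖∇f_δ(x)‖² + c₁₁·c₁₂·δ²·L²·(d+1). -/

import Mathlib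

open MeasureTheory Real Filter Topology ProbabilityTheory

/-- The truncated (to the `δ`-sphere) Cauchy density on `ℝ^d`, with normalizing
constant `c₁`: `h_δ(u) = Γ((d+1)/2)/(π^((d+1)/2) c₁ δ^d) · (1+‖u‖²/δ²)^(-(d+1)/2)`
for `‖u‖ ≤ δ` and `0` otherwise. -/
noncomputable def truncCauchy (d : ℕ) (c₁ δ : ℝ) (u : EuclideanSpace ℝ (Fin d)) : ℝ :=
  if ‖u‖ ≤ δ then
    Real.Gamma (((d : ℝ) + 1) / 2) / (Real.pi ^ (((d : ℝ) + 1) / 2) * c₁ * δ ^ d) *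
      (1 + ‖u‖ ^ 2 / δ ^ 2) ^ (-(((d : ℝ) + 1) / 2))
  else 0

/-- The unit-scale truncated Cauchy probability measure on `ℝ^d`. -/
noncomputable def truncCauchyMeasure (d : ℕ) (c₁ : ℝ) : Measure (EuclideanSpace ℝ (Fin d)) :=
  volume.withDensity fun v => ENNReal.ofReal (truncCauchy d c₁ 1 v)

/-!
Inside the smoothed gradient, expand `f (x + δu) - f x = δ ⟪∇f(x), u⟫ + r(u)` with
`|r(u)| ≤ L δ² ‖u‖²`. The linear part contributes `A ∇f(x)`, and `A = c₂ I` because the weight is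
radial (a reflection exchanges any two unit directions and preserves volume); the remainder is at
most `L δ (d+1)/2` since `‖u‖³/(1+‖u‖²) ≤ 1/2` on the unit ball. Hence
`c₂ ‖∇f(x)‖ ≤ ‖∇f_δ(x)‖ + L δ (d+1)/2`; squaring, the bound follows from `1 ≤ d ≤ c₁₁`, where
`d ≤ c₁₁` compares `∫ h = 1` with `h(0)` times the volume of the unit ball.
-/

open scoped RealInnerProductSpace

section Taylor

variable {E : Type*} [NormedAddCommGroup E] [InnerProductSpace ℝ E] [CompleteSpace E]

theorem abs_sub_sub_inner_gradient_le {f : E → ℝ} {L : ℝ} (hf : Differentiable ℝ f)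
    (hlip : ∀ a b, ‖gradient f a - gradient f b‖ ≤ L * ‖a - b‖) (x y : E) :
    |f y - f x - ⟪gradient f x, y - x⟫| ≤ L * ‖y - x‖ ^ 2 := by
  rcases eq_or_ne y x with rfl | hyx
  · simp
  have hL : 0 ≤ L := nonneg_of_mul_nonneg_left ((norm_nonneg _).trans (hlip y x))
    (norm_pos_iff.2 (sub_ne_zero.2 hyx))
  have hfderiv (z : E) : fderiv ℝ f z = InnerProductSpace.toDual ℝ E (gradient f z) := by
    simp [gradient]
  have hbound : ∀ z ∈ Metric.closedBall x ‖y - x‖,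
      ‖fderiv ℝ f z - fderiv ℝ f x‖ ≤ L * ‖y - x‖ := by
    intro z hz
    rw [hfderiv, hfderiv, ← map_sub, LinearIsometryEquiv.norm_map]
    exact (hlip z x).trans (mul_le_mul_of_nonneg_left (mem_closedBall_iff_norm.1 hz) hL)
  have := (convex_closedBall x ‖y - x‖).norm_image_sub_le_of_norm_fderiv_le' (fun z _ => hf z)
    hbound (Metric.mem_closedBall_self (norm_nonneg _)) (mem_closedBall_iff_norm.2 le_rfl)
  rw [hfderiv, InnerProductSpace.toDual_apply_apply] at this
  simpa [sq, mul_assoc] using this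

end Taylor

section Radial

variable {E : Type*} [NormedAddCommGroup E] [InnerProductSpace ℝ E] [FiniteDimensional ℝ E]
  [MeasurableSpace E] [BorelSpace E] {w : E → ℝ}

theorem integral_mul_inner_sq_eq_of_norm_eq (hw : ∀ u v : E, ‖u‖ = ‖v‖ → w u = w v) {a b : E}
    (hab : ‖a‖ = ‖b‖) :
    ∫ u, w u * ⟪u, a⟫ ^ 2 = ∫ u, w u * ⟪u, b⟫ ^ 2 := by
  let R : E ≃ₗᵢ[ℝ] E := Submodule.reflection (ℝ ∙ (a - b))ᗮ
  have hRa : R a = b := Submodule.reflection_sub hab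
  rw [← R.measurePreserving.integral_comp R.toHomeomorph.measurableEmbedding
    (fun u => w u * ⟪u, b⟫ ^ 2)]
  congr 1 with u
  rw [hw (R u) u (R.norm_map u), ← hRa, R.inner_map_map]

theorem integral_mul_inner_sq_eq_mul_norm_sq (hw : ∀ u v : E, ‖u‖ = ‖v‖ → w u = w v) {e : E}
    (he : ‖e‖ = 1) (a : E) :
    ∫ u, w u * ⟪u, a⟫ ^ 2 = (∫ u, w u * ⟪u, e⟫ ^ 2) * ‖a‖ ^ 2 := by
  rw [integral_mul_inner_sq_eq_of_norm_eq hw (b := ‖a‖ • e) (by simp [norm_smul, he]),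
    ← integral_mul_const]
  congr 1 with u
  rw [real_inner_smul_right]
  ring

theorem integrable_mul_inner_sq (hw_meas : AEStronglyMeasurable w)
    (hw₂ : Integrable fun u => w u * ‖u‖ ^ 2) (a : E) :
    Integrable fun u => w u * ⟪u, a⟫ ^ 2 := by
  refine (hw₂.norm.mul_const (‖a‖ ^ 2)).mono' (hw_meas.mul (by fun_prop))
    (.of_forall fun u => ?_)
  have : ⟪u, a⟫ ^ 2 ≤ (‖u‖ * ‖a‖) ^ 2 := by
    simpa using sq_le_sq' (neg_le_of_abs_le (abs_real_inner_le_norm u a)) (real_inner_le_norm u a)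
  simp only [norm_mul, norm_pow, Real.norm_eq_abs, sq_abs, abs_norm]
  rw [mul_assoc]
  gcongr
  rwa [← mul_pow]

theorem integrable_mul_inner_smul (hw_meas : AEStronglyMeasurable w)
    (hw₂ : Integrable fun u => w u * ‖u‖ ^ 2) (g : E) :
    Integrable fun u => (w u * ⟪u, g⟫) • u := by
  refine (hw₂.norm.mul_const ‖g‖).mono' ((hw_meas.mul (by fun_prop)).smul aestronglyMeasurable_id)
    (.of_forall fun u => ?_)
  have := abs_real_inner_le_norm u g
  simp only [norm_smul, norm_mul, norm_pow, Real.norm_eq_abs, abs_norm]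
  calc |w u| * |⟪u, g⟫| * ‖u‖ ≤ |w u| * (‖u‖ * ‖g‖) * ‖u‖ := by gcongr
    _ = |w u| * ‖u‖ ^ 2 * ‖g‖ := by ring

theorem integral_mul_inner_smul (hw : ∀ u v : E, ‖u‖ = ‖v‖ → w u = w v)
    (hw_meas : AEStronglyMeasurable w) (hw₂ : Integrable fun u => w u * ‖u‖ ^ 2) {e : E}
    (he : ‖e‖ = 1) (g : E) :
    ∫ u, (w u * ⟪u, g⟫) • u = (∫ u, w u * ⟪u, e⟫ ^ 2) • g := by
  refine ext_inner_left ℝ fun v => ?_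
  have hpolar (u : E) :
      ⟪v, (w u * ⟪u, g⟫) • u⟫ = (w u * ⟪u, g + v⟫ ^ 2 - w u * ⟪u, g - v⟫ ^ 2) / 4 := by
    simp only [real_inner_smul_right, inner_add_right, inner_sub_right, real_inner_comm v u]
    ring
  rw [← integral_inner (integrable_mul_inner_smul hw_meas hw₂ g), real_inner_smul_right]
  simp_rw [hpolar]
  rw [integral_div, integral_sub (integrable_mul_inner_sq hw_meas hw₂ _)
    (integrable_mul_inner_sq hw_meas hw₂ _), integral_mul_inner_sq_eq_mul_norm_sq hw he (g + v),
    integral_mul_inner_sq_eq_mul_norm_sq hw he (g - v), norm_add_sq_real, norm_sub_sq_real,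
    real_inner_comm v g]
  ring

end Radial

section SmoothedGradient

variable {E : Type*} [NormedAddCommGroup E] [InnerProductSpace ℝ E] [FiniteDimensional ℝ E]
  [MeasurableSpace E] [BorelSpace E]

noncomputable def smoothedGradient (w f : E → ℝ) (δ : ℝ) (x : E) : E :=
  δ⁻¹ • ∫ u, (w u * (f (x + δ • u) - f x)) • u

theorem norm_smoothedGradient_sub_smul_gradient_le {w : E → ℝ}
    (hw : ∀ u v : E, ‖u‖ = ‖v‖ → w u = w v) (hw_meas : AEStronglyMeasurable w)
    (hw₂ : Integrable fun u => w u * ‖u‖ ^ 2) (hw₃ : Integrable fun u => w u * ‖u‖ ^ 3)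
    {e : E} (he : ‖e‖ = 1) {f : E → ℝ} {L : ℝ} (hf : Differentiable ℝ f)
    (hlip : ∀ a b, ‖gradient f a - gradient f b‖ ≤ L * ‖a - b‖) {δ : ℝ} (hδ : 0 < δ) (x : E) :
    ‖smoothedGradient w f δ x - (∫ u, w u * ⟪u, e⟫ ^ 2) • gradient f x‖ ≤
      L * δ * ∫ u, |w u| * ‖u‖ ^ 3 := by
  set g := gradient f x
  set r : E → ℝ := fun u => f (x + δ • u) - f x - δ * ⟪u, g⟫ with hr_def
  have hr (u : E) : |r u| ≤ L * δ ^ 2 * ‖u‖ ^ 2 := by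
    have := abs_sub_sub_inner_gradient_le hf hlip x (x + δ • u)
    rwa [add_sub_cancel_left, real_inner_smul_right, real_inner_comm, norm_smul,
      Real.norm_of_nonneg hδ.le, mul_pow, ← mul_assoc] at this
  have hr_cont : Continuous r := by
    have := hf.continuous
    fun_prop
  have hw₃' : Integrable fun u => |w u| * ‖u‖ ^ 3 := by simpa [abs_mul] using hw₃.abs
  have hbound (u : E) : ‖(w u * r u) • u‖ ≤ L * δ ^ 2 * (|w u| * ‖u‖ ^ 3) := by
    rw [norm_smul, norm_mul, Real.norm_eq_abs, Real.norm_eq_abs]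
    calc |w u| * |r u| * ‖u‖ ≤ |w u| * (L * δ ^ 2 * ‖u‖ ^ 2) * ‖u‖ := by gcongr; exact hr u
      _ = L * δ ^ 2 * (|w u| * ‖u‖ ^ 3) := by ring
  have hr_int : Integrable fun u => (w u * r u) • u :=
    (hw₃'.const_mul _).mono'
      ((hw_meas.mul hr_cont.aestronglyMeasurable).smul aestronglyMeasurable_id) (.of_forall hbound)
  have hsplit : ∫ u, (w u * (f (x + δ • u) - f x)) • u =
      δ • (∫ u, (w u * ⟪u, g⟫) • u) + ∫ u, (w u * r u) • u := by
    rw [← integral_smul,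
      ← integral_add ((integrable_mul_inner_smul hw_meas hw₂ g).fun_smul δ) hr_int]
    congr 1 with u
    rw [smul_smul, ← add_smul, hr_def]
    ring_nf
  have hremainder : smoothedGradient w f δ x - (∫ u, w u * ⟪u, e⟫ ^ 2) • g =
      δ⁻¹ • ∫ u, (w u * r u) • u := by
    rw [smoothedGradient, hsplit, integral_mul_inner_smul hw hw_meas hw₂ he, smul_add, smul_smul,
      inv_mul_cancel₀ hδ.ne', one_smul, add_sub_cancel_left]
  rw [hremainder, norm_smul, Real.norm_of_nonneg (inv_nonneg.2 hδ.le)]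
  calc δ⁻¹ * ‖∫ u, (w u * r u) • u‖ ≤ δ⁻¹ * ∫ u, L * δ ^ 2 * (|w u| * ‖u‖ ^ 3) := by
        gcongr
        exact norm_integral_le_of_norm_le (hw₃'.const_mul _) (.of_forall hbound)
    _ = L * δ * ∫ u, |w u| * ‖u‖ ^ 3 := by
        rw [integral_const_mul]
        field_simp

end SmoothedGradient

section TruncCauchy

variable {d : ℕ} {c₁ : ℝ}

theorem truncCauchy_eq_of_norm_eq {δ : ℝ} {u v : EuclideanSpace ℝ (Fin d)} (h : ‖u‖ = ‖v‖) :
    truncCauchy d c₁ δ u = truncCauchy d c₁ δ v := by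
  simp only [truncCauchy, h]

theorem truncCauchy_nonneg (hc₁ : 0 < c₁) (u : EuclideanSpace ℝ (Fin d)) :
    0 ≤ truncCauchy d c₁ 1 u := by
  unfold truncCauchy
  split_ifs <;> positivity

theorem truncCauchy_pos (hc₁ : 0 < c₁) {u : EuclideanSpace ℝ (Fin d)} (hu : ‖u‖ ≤ 1) :
    0 < truncCauchy d c₁ 1 u := by
  rw [truncCauchy, if_pos hu]
  positivity

theorem truncCauchy_le_truncCauchy_zero (hc₁ : 0 < c₁) (u : EuclideanSpace ℝ (Fin d)) :
    truncCauchy d c₁ 1 u ≤ truncCauchy d c₁ 1 0 := by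
  have hpeak : 0 < truncCauchy d c₁ 1 0 := truncCauchy_pos hc₁ (by simp)
  unfold truncCauchy at hpeak ⊢
  simp only [norm_zero, one_pow, div_one, zero_le_one, if_true, ne_eq, OfNat.ofNat_ne_zero,
    not_false_eq_true, zero_pow, add_zero, Real.one_rpow, mul_one] at hpeak ⊢
  split_ifs
  · refine mul_le_of_le_one_right hpeak.le (Real.rpow_le_one_of_one_le_of_nonpos ?_ ?_)
    · nlinarith [sq_nonneg ‖u‖]
    · linarith [show (0 : ℝ) ≤ ((d : ℝ) + 1) / 2 by positivity]
  · exact hpeak.le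

theorem integrable_truncCauchy_mul {F : EuclideanSpace ℝ (Fin d) → ℝ} (hF : Continuous F) :
    Integrable fun u => truncCauchy d c₁ 1 u * F u := by
  have hind : (fun u => truncCauchy d c₁ 1 u * F u) = (Metric.closedBall 0 1).indicator fun u =>
      Real.Gamma (((d : ℝ) + 1) / 2) / (Real.pi ^ (((d : ℝ) + 1) / 2) * c₁) *
        (1 + ‖u‖ ^ 2) ^ (-(((d : ℝ) + 1) / 2)) * F u := by
    ext u
    by_cases hu : ‖u‖ ≤ 1 <;> simp [truncCauchy, hu]
  rw [hind, integrable_indicator_iff measurableSet_closedBall]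
  refine ContinuousOn.integrableOn_compact (isCompact_closedBall 0 1) (Continuous.continuousOn ?_)
  exact (continuous_const.mul ((by fun_prop : Continuous fun u : EuclideanSpace ℝ (Fin d) =>
    1 + ‖u‖ ^ 2).rpow_const fun u => Or.inl (by positivity))).mul hF

/-- With this weight, `smoothedGradient (cauchyWeight d c₁) f δ` is the paper's `∇f_δ`
(`smoothedGradient_cauchyWeight`) and `∫ cauchyWeight d c₁ u * ⟪u, e⟫ ^ 2` is `c₂` for unit `e`. -/
noncomputable def cauchyWeight (d : ℕ) (c₁ : ℝ) (u : EuclideanSpace ℝ (Fin d)) : ℝ :=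
  truncCauchy d c₁ 1 u * (((d : ℝ) + 1) / (1 + ‖u‖ ^ 2))

theorem cauchyWeight_eq_of_norm_eq {u v : EuclideanSpace ℝ (Fin d)} (h : ‖u‖ = ‖v‖) :
    cauchyWeight d c₁ u = cauchyWeight d c₁ v := by
  rw [cauchyWeight, cauchyWeight, truncCauchy_eq_of_norm_eq h, h]

theorem smoothedGradient_cauchyWeight (f : EuclideanSpace ℝ (Fin d) → ℝ) (δ : ℝ)
    (x : EuclideanSpace ℝ (Fin d)) :
    smoothedGradient (cauchyWeight d c₁) f δ x = δ⁻¹ • ∫ u,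
      (truncCauchy d c₁ 1 u * ((f (x + δ • u) - f x) * (((d : ℝ) + 1) / (1 + ‖u‖ ^ 2)))) • u := by
  rw [smoothedGradient]
  congr 2
  funext u
  rw [cauchyWeight]
  congr 1
  ring

theorem integral_cauchyWeight_mul_inner_single_sq (i : Fin d) :
    ∫ u, cauchyWeight d c₁ u * ⟪u, EuclideanSpace.single i 1⟫ ^ 2 =
      ∫ u, truncCauchy d c₁ 1 u * (((d : ℝ) + 1) * u i ^ 2 / (1 + ‖u‖ ^ 2)) := by
  congr 1 with u
  simp only [cauchyWeight, EuclideanSpace.inner_single_right, conj_trivial, one_mul]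
  ring

theorem integrable_cauchyWeight_mul {F : EuclideanSpace ℝ (Fin d) → ℝ} (hF : Continuous F) :
    Integrable fun u => cauchyWeight d c₁ u * F u := by
  simpa only [cauchyWeight, mul_assoc] using
    integrable_truncCauchy_mul (c₁ := c₁) (F := fun u => ((d : ℝ) + 1) / (1 + ‖u‖ ^ 2) * F u)
      (by fun_prop (disch := intro; positivity))

theorem aestronglyMeasurable_cauchyWeight : AEStronglyMeasurable (cauchyWeight d c₁) := by
  simpa using (integrable_cauchyWeight_mul (c₁ := c₁) (d := d) (F := fun _ => 1)
    continuous_const).aestronglyMeasurable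

theorem integral_abs_cauchyWeight_mul_norm_pow_three_le (hc₁ : 0 < c₁)
    (hnorm : ∫ u, truncCauchy d c₁ 1 u = 1) :
    ∫ u, |cauchyWeight d c₁ u| * ‖u‖ ^ 3 ≤ ((d : ℝ) + 1) / 2 := by
  have hpoint (u : EuclideanSpace ℝ (Fin d)) :
      |cauchyWeight d c₁ u| * ‖u‖ ^ 3 ≤ truncCauchy d c₁ 1 u * (((d : ℝ) + 1) / 2) := by
    rw [cauchyWeight, abs_of_nonneg (mul_nonneg (truncCauchy_nonneg hc₁ u) (by positivity)),
      mul_assoc]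
    by_cases hu : ‖u‖ ≤ 1
    · gcongr
      · exact truncCauchy_nonneg hc₁ u
      rw [div_mul_eq_mul_div, div_le_div_iff₀ (by positivity) two_pos]
      have : 2 * ‖u‖ ^ 3 ≤ 1 + ‖u‖ ^ 2 := by nlinarith [norm_nonneg u]
      nlinarith [show (0 : ℝ) ≤ d by positivity]
    · simp [truncCauchy, hu]
  calc ∫ u, |cauchyWeight d c₁ u| * ‖u‖ ^ 3 ≤ ∫ u, truncCauchy d c₁ 1 u * (((d : ℝ) + 1) / 2) :=
        integral_mono ((integrable_cauchyWeight_mul (d := d) (c₁ := c₁)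
          (F := fun u => ‖u‖ ^ 3) (by fun_prop)).abs.congr (.of_forall fun u => by
            simp only [abs_mul, abs_pow, abs_norm]))
          (integrable_truncCauchy_mul continuous_const) hpoint
    _ = ((d : ℝ) + 1) / 2 := by rw [integral_mul_const, hnorm, one_mul]

theorem norm_smoothedGradient_cauchyWeight_sub_le (hc₁ : 0 < c₁)
    (hnorm : ∫ u, truncCauchy d c₁ 1 u = 1) {e : EuclideanSpace ℝ (Fin d)} (he : ‖e‖ = 1)
    {f : EuclideanSpace ℝ (Fin d) → ℝ} {L : ℝ} (hf : Differentiable ℝ f)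
    (hlip : ∀ a b, ‖gradient f a - gradient f b‖ ≤ L * ‖a - b‖) {δ : ℝ} (hδ : 0 < δ)
    (x : EuclideanSpace ℝ (Fin d)) :
    ‖smoothedGradient (cauchyWeight d c₁) f δ x -
        (∫ u, cauchyWeight d c₁ u * ⟪u, e⟫ ^ 2) • gradient f x‖ ≤ L * δ * (((d : ℝ) + 1) / 2) := by
  have hL : 0 ≤ L := by simpa [he] using (norm_nonneg _).trans (hlip e 0)
  refine (norm_smoothedGradient_sub_smul_gradient_le (fun _ _ => cauchyWeight_eq_of_norm_eq)
    aestronglyMeasurable_cauchyWeight (integrable_cauchyWeight_mul (by fun_prop))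
    (integrable_cauchyWeight_mul (by fun_prop)) he hf hlip hδ x).trans ?_
  gcongr
  exact integral_abs_cauchyWeight_mul_norm_pow_three_le hc₁ hnorm

theorem integral_cauchyWeight_mul_inner_sq_pos (hc₁ : 0 < c₁) {e : EuclideanSpace ℝ (Fin d)}
    (he : e ≠ 0) : 0 < ∫ u, cauchyWeight d c₁ u * ⟪u, e⟫ ^ 2 := by
  have hnonneg : 0 ≤ fun u => cauchyWeight d c₁ u * ⟪u, e⟫ ^ 2 := fun u =>
    mul_nonneg (mul_nonneg (truncCauchy_nonneg hc₁ u) (by positivity)) (sq_nonneg _)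
  rw [integral_pos_iff_support_of_nonneg hnonneg (integrable_cauchyWeight_mul (by fun_prop))]
  set U := {u : EuclideanSpace ℝ (Fin d) | ‖u‖ < 1 ∧ ⟪u, e⟫ ≠ 0}
  have hU_open : IsOpen U :=
    (isOpen_lt continuous_norm continuous_const).inter
      (isOpen_ne_fun (continuous_id.inner continuous_const) continuous_const)
  have hU_ne : U.Nonempty := by
    refine ⟨(2 * ‖e‖)⁻¹ • e, ?_, ?_⟩
    · have := norm_pos_iff.2 he
      rw [norm_smul, norm_inv, norm_mul, Real.norm_two, norm_norm, inv_mul_lt_iff₀ (by positivity)]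
      linarith
    · rw [real_inner_smul_left, real_inner_self_eq_norm_sq]
      positivity
  refine (hU_open.measure_pos volume hU_ne).trans_le (measure_mono fun u hu => ?_)
  exact (mul_pos (mul_pos (truncCauchy_pos hc₁ hu.1.le) (by positivity))
    (sq_pos_of_ne_zero hu.2)).ne'

theorem integral_truncCauchy_le_mul_volume_closedBall (hc₁ : 0 < c₁) :
    ∫ u, truncCauchy d c₁ 1 u ≤
      truncCauchy d c₁ 1 0 * volume.real (Metric.closedBall (0 : EuclideanSpace ℝ (Fin d)) 1) := by
  have hpoint (u : EuclideanSpace ℝ (Fin d)) :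
      truncCauchy d c₁ 1 u ≤
        (Metric.closedBall 0 1).indicator (fun _ => truncCauchy d c₁ 1 0) u := by
    by_cases hu : ‖u‖ ≤ 1
    · rw [Set.indicator_of_mem (mem_closedBall_zero_iff.2 hu)]
      exact truncCauchy_le_truncCauchy_zero hc₁ u
    · rw [Set.indicator_of_notMem (mt mem_closedBall_zero_iff.1 hu)]
      simp [truncCauchy, hu]
  have hint : Integrable (truncCauchy d c₁ 1) := by
    simpa using integrable_truncCauchy_mul (d := d) (c₁ := c₁) (F := fun _ => 1) continuous_const
  calc ∫ u, truncCauchy d c₁ 1 u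
      ≤ ∫ u, (Metric.closedBall (0 : EuclideanSpace ℝ (Fin d)) 1).indicator
          (fun _ => truncCauchy d c₁ 1 0) u :=
        integral_mono hint ((integrable_indicator_iff measurableSet_closedBall).2
          (integrableOn_const measure_closedBall_lt_top.ne)) hpoint
    _ = _ := by rw [integral_indicator_const _ measurableSet_closedBall, smul_eq_mul, mul_comm]

theorem natCast_le_of_integral_truncCauchy_eq_one (hd : 0 < d) (hc₁ : 0 < c₁)
    (hnorm : ∫ u, truncCauchy d c₁ 1 u = 1) :
    (d : ℝ) ≤ 2 * Real.Gamma (((d : ℝ) + 1) / 2) / (√π * Real.Gamma ((d : ℝ) / 2) * c₁) := by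
  have : Nonempty (Fin d) := ⟨⟨0, hd⟩⟩
  have hbound := integral_truncCauchy_le_mul_volume_closedBall (d := d) hc₁
  have hpow : π ^ (((d : ℝ) + 1) / 2) = √π ^ (d + 1) := by
    rw [Real.sqrt_eq_rpow, ← Real.rpow_natCast, ← Real.rpow_mul Real.pi_pos.le]
    push_cast
    ring_nf
  have hΓ : Real.Gamma ((d : ℝ) / 2 + 1) = (d : ℝ) / 2 * Real.Gamma ((d : ℝ) / 2) :=
    Real.Gamma_add_one (by positivity)
  have hΓpos : 0 < Real.Gamma ((d : ℝ) / 2) := Real.Gamma_pos_of_pos (by positivity)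
  have hpeak : truncCauchy d c₁ 1 0 = Real.Gamma (((d : ℝ) + 1) / 2) / (√π ^ (d + 1) * c₁) := by
    simp [truncCauchy, hpow]
  rw [hnorm, hpeak, measureReal_def, EuclideanSpace.volume_closedBall] at hbound
  simp only [ENNReal.ofReal_one, one_pow, one_mul, Fintype.card_fin, hΓ, pow_succ,
    ENNReal.toReal_ofReal (by positivity : 0 ≤ √π ^ d / ((d : ℝ) / 2 * Real.Gamma ((d : ℝ) / 2)))]
    at hbound
  have hsπ : 0 < √π := Real.sqrt_pos.2 Real.pi_pos
  rw [le_div_iff₀ (by positivity)]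
  field_simp at hbound
  linarith

end TruncCauchy

theorem sq_norm_le_of_norm_sub_smul_le {F : Type*} [SeminormedAddCommGroup F] [NormedSpace ℝ F]
    {v g : F} {c Q : ℝ} (hc : 0 < c) (h : ‖v - c • g‖ ≤ Q) :
    ‖g‖ ^ 2 ≤ 2 * (‖v‖ ^ 2 + Q ^ 2) / c ^ 2 := by
  have hcg : c * ‖g‖ ≤ ‖v‖ + Q := by
    rw [← Real.norm_of_nonneg hc.le, ← norm_smul]
    exact (norm_le_norm_add_norm_sub v _).trans (by gcongr)
  rw [le_div_iff₀ (by positivity)]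
  calc ‖g‖ ^ 2 * c ^ 2 = (c * ‖g‖) ^ 2 := by ring
    _ ≤ (‖v‖ + Q) ^ 2 := pow_le_pow_left₀ (by positivity) hcg 2
    _ ≤ 2 * (‖v‖ ^ 2 + Q ^ 2) := add_sq_le

/-- Lower-bounding the true gradient by the one-sided smoothed gradient:
`‖∇f(x)‖² ≤ 2c₁₂‖∇f_δ(x)‖² + c₁₁c₁₂δ²L²(d+1)` with `c₁₂ = d/c₂²`. -/
theorem true_gradient_bound_by_smoothed
    (d : ℕ) (hd : 0 < d) (c₁ : ℝ) (hc₁ : 0 < c₁)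
    (hnorm : ∫ u : EuclideanSpace ℝ (Fin d), truncCauchy d c₁ 1 u = 1)
    (f : EuclideanSpace ℝ (Fin d) → ℝ) (L : ℝ)
    (hf : Differentiable ℝ f)
    (hlip : ∀ a b : EuclideanSpace ℝ (Fin d), ‖gradient f a - gradient f b‖ ≤ L * ‖a - b‖)
    (c₂ c₁₁ c₁₂ : ℝ)
    (hc₂ : c₂ = ∫ u : EuclideanSpace ℝ (Fin d),
      truncCauchy d c₁ 1 u * (((d : ℝ) + 1) * (u ⟨0, hd⟩) ^ 2 / (1 + ‖u‖ ^ 2)))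
    (hc₁₁ : c₁₁ = 2 * Real.Gamma (((d : ℝ) + 1) / 2) /
      (Real.sqrt Real.pi * Real.Gamma ((d : ℝ) / 2) * c₁))
    (hc₁₂ : c₁₂ = (d : ℝ) / c₂ ^ 2)
    (δ : ℝ) (hδ : 0 < δ) (x : EuclideanSpace ℝ (Fin d))
    (gradfδ : EuclideanSpace ℝ (Fin d))
    (hgradfδ : gradfδ = δ⁻¹ • ∫ u : EuclideanSpace ℝ (Fin d),
      (truncCauchy d c₁ 1 u * ((f (x + δ • u) - f x) * (((d : ℝ) + 1) / (1 + ‖u‖ ^ 2)))) • u) :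
    ‖gradient f x‖ ^ 2 ≤ 2 * c₁₂ * ‖gradfδ‖ ^ 2 + c₁₁ * c₁₂ * δ ^ 2 * L ^ 2 * ((d : ℝ) + 1) := by
  set e₀ : EuclideanSpace ℝ (Fin d) := EuclideanSpace.single ⟨0, hd⟩ 1
  have he₀ : ‖e₀‖ = 1 := by simp [e₀]
  have hc₂' : c₂ = ∫ u, cauchyWeight d c₁ u * ⟪u, e₀⟫ ^ 2 := by
    rw [hc₂, integral_cauchyWeight_mul_inner_single_sq]
  have happrox : ‖gradfδ - c₂ • gradient f x‖ ≤ L * δ * (((d : ℝ) + 1) / 2) := by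
    rw [hgradfδ, ← smoothedGradient_cauchyWeight, hc₂']
    exact norm_smoothedGradient_cauchyWeight_sub_le hc₁ hnorm he₀ hf hlip hδ x
  have hc₂pos : 0 < c₂ :=
    hc₂' ▸ integral_cauchyWeight_mul_inner_sq_pos hc₁ (norm_ne_zero_iff.1 (by simp [he₀]))
  have hdc₁₁ : (d : ℝ) ≤ c₁₁ := hc₁₁ ▸ natCast_le_of_integral_truncCauchy_eq_one hd hc₁ hnorm
  have hd₁ : (1 : ℝ) ≤ d := Nat.one_le_cast.2 hd
  calc ‖gradient f x‖ ^ 2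
      ≤ 2 * (‖gradfδ‖ ^ 2 + (L * δ * (((d : ℝ) + 1) / 2)) ^ 2) / c₂ ^ 2 :=
        sq_norm_le_of_norm_sub_smul_le hc₂pos happrox
    _ = (2 * ‖gradfδ‖ ^ 2 + ((d : ℝ) + 1) / 2 * (δ ^ 2 * L ^ 2 * (d + 1))) / c₂ ^ 2 := by ring
    _ ≤ (2 * d * ‖gradfδ‖ ^ 2 + c₁₁ * d * (δ ^ 2 * L ^ 2 * (d + 1))) / c₂ ^ 2 := by
        gcongr
        · nlinarith
        · nlinarith
    _ = _ := by rw [hc₁₂]; ring
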